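/- The map encode₁ from [q]^{n−1} × {1,...,q−1} to [q]^n defined by: if c[n] ≠ c[ℓ−1] output c, else output c[1..n−1] appended with 0, is injective, and every word in its image satisfies x[ℓ−1] ≠ x[n]. Consequently there are at least q^{n−1}(q−1) words of length n with pairwise distinct ℓ-gram profile vectors when ℓ ≤ n < 2ℓ. -/

import Mathlib

attribute [local instance] Classical.propDecidable

/-- The ℓ-gram profile vector of `x`. -/
noncomputable def profileVec (q n ℓ : ℕ) (x : Fin n → Fin q) : (Fin ℓ → Fin q) → ℕ :=
  fun z => ((Finset.range (n + 1 - ℓ)).filter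
    (fun i => ∀ k : Fin ℓ, ∀ h : i + k.val < n, x ⟨i + k.val, h⟩ = z k)).card

/-- Algorithm 1: if the last symbol of `c` differs from the symbol at
(1-indexed) position `ℓ−1`, output `c`; otherwise replace the last symbol by `0`. -/
def encode1 (q n ℓ : ℕ) (hq : 0 < q) (hn : 0 < n) (hℓ2 : 2 ≤ ℓ) (hℓn : ℓ ≤ n)
    (c : Fin n → Fin q) : Fin n → Fin q :=
  if c ⟨n - 1, by omega⟩ ≠ c ⟨ℓ - 2, by omega⟩ then c
  else Function.update c ⟨n - 1, by omega⟩ ⟨0, hq⟩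

/-
Write `ℓ = k + 2` and `N = n - (k + 1)` (positions are 0-indexed). Summing the profile over the
last, resp. first, letter of a window counts the occurrences of a `(k + 1)`-word `z` at the
positions `0, …, N - 1`, resp. `1, …, N`; so the profile determines
`[z occurs at 0] - [z occurs at N]`. The prefix of `x` of length `k + 1` occurs at `0` but not at
`N`, because `x[k] ≠ x[n - 1]`, hence it is also a prefix of `y`; symmetrically for the suffix.
As `n < 2ℓ`, prefix and suffix cover every position except possibly `k + 1`, and that letter is
recovered from the number of windows ending in it. Words with a nonzero last letter are mapped
injectively by `encode1` to words with `x[ℓ - 2] ≠ x[n - 1]`, which gives `q ^ (n - 1) * (q - 1)`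
words with pairwise distinct profiles.
-/

open Finset

section Window

variable {α : Type*} {n ℓ m : ℕ}

def window (x : Fin n → α) (j : Fin (n + 1 - ℓ)) : Fin ℓ → α :=
  fun k => x ⟨j + k, by omega⟩

-- As in `profileVec`, positions past the end of `x` impose no condition.
def OccursAt (x : Fin n → α) (z : Fin m → α) (i : ℕ) : Prop :=
  ∀ k : Fin m, ∀ h : i + k < n, x ⟨i + k, h⟩ = z k

theorem window_eq_iff_occursAt (x : Fin n → α) (j : Fin (n + 1 - ℓ)) (z : Fin ℓ → α) :
    window x j = z ↔ OccursAt x z j :=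
  ⟨fun h k _ => congrFun h k, fun h => funext fun k => h k _⟩

theorem init_window_eq_iff_occursAt (x : Fin n → α) (j : Fin (n + 1 - (m + 1)))
    (z : Fin m → α) : Fin.init (window x j) = z ↔ OccursAt x z j :=
  ⟨fun h k _ => congrFun h k, fun h => funext fun k => h k (by omega)⟩

theorem tail_window_eq_iff_occursAt (x : Fin n → α) (j : Fin (n + 1 - (m + 1)))
    (z : Fin m → α) : Fin.tail (window x j) = z ↔ OccursAt x z (j + 1) := by
  have hwin (k : Fin m) : Fin.tail (window x j) k = x ⟨j + 1 + k, by omega⟩ :=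
    congrArg x (Fin.mk_eq_mk.2 (by simp only [Fin.val_succ]; omega))
  exact ⟨fun h k _ => (hwin k).symm.trans (congrFun h k),
    fun h => funext fun k => (hwin k).trans (h k _)⟩

end Window

variable {q n ℓ m : ℕ}

theorem profileVec_eq_card_window (x : Fin n → Fin q) (z : Fin ℓ → Fin q) :
    profileVec q n ℓ x z = #{j | window x j = z} := by
  symm
  refine Finset.card_bij (fun j _ => (j : ℕ)) ?_ (fun _ _ _ _ => Fin.ext) ?_
  · intro j hj
    simp only [mem_filter, mem_univ, true_and] at hj
    exact mem_filter.2 ⟨mem_range.2 j.2, (window_eq_iff_occursAt x j z).1 hj⟩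
  · intro i hi
    obtain ⟨hi, hocc⟩ := mem_filter.1 hi
    exact ⟨⟨i, mem_range.1 hi⟩,
      by simpa using (window_eq_iff_occursAt x ⟨i, mem_range.1 hi⟩ z).2 hocc, rfl⟩

theorem sum_window_eq_sum_profileVec {M : Type*} [AddCommMonoid M] (x : Fin n → Fin q)
    (f : (Fin ℓ → Fin q) → M) :
    ∑ j, f (window x j) = ∑ z, profileVec q n ℓ x z • f z := by
  rw [← Finset.sum_fiberwise' univ (window x) f]
  simp only [sum_const, profileVec_eq_card_window]

theorem sum_window_eq_of_profileVec_eq {M : Type*} [AddCommMonoid M] {x y : Fin n → Fin q}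
    (hxy : profileVec q n ℓ x = profileVec q n ℓ y) (f : (Fin ℓ → Fin q) → M) :
    ∑ j, f (window x j) = ∑ j, f (window y j) := by
  rw [sum_window_eq_sum_profileVec, sum_window_eq_sum_profileVec, hxy]

theorem occursAt_zero_add_occursAt_eq {x y : Fin n → Fin q}
    (hxy : profileVec q n (m + 1) x = profileVec q n (m + 1) y) (z : Fin m → Fin q) :
    (if OccursAt x z 0 then 1 else 0) + (if OccursAt y z (n - m) then 1 else 0) =
      (if OccursAt y z 0 then 1 else 0) + (if OccursAt x z (n - m) then 1 else 0) := by
  have hinit : ∑ i ∈ range (n - m), (if OccursAt x z i then 1 else 0) =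
      ∑ i ∈ range (n - m), (if OccursAt y z i then 1 else 0) := by
    rw [← Nat.add_sub_add_right n 1 m, ← Fin.sum_univ_eq_sum_range, ← Fin.sum_univ_eq_sum_range]
    simpa only [init_window_eq_iff_occursAt] using
      sum_window_eq_of_profileVec_eq hxy fun w => if Fin.init w = z then 1 else 0
  have htail : ∑ i ∈ range (n - m), (if OccursAt x z (i + 1) then 1 else 0) =
      ∑ i ∈ range (n - m), (if OccursAt y z (i + 1) then 1 else 0) := by
    rw [← Nat.add_sub_add_right n 1 m, ← Fin.sum_univ_eq_sum_range (fun i => _),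
      ← Fin.sum_univ_eq_sum_range (fun i => _)]
    simpa only [tail_window_eq_iff_occursAt] using
      sum_window_eq_of_profileVec_eq hxy fun w => if Fin.tail w = z then 1 else 0
  have telescope (x : Fin n → Fin q) :
      ∑ i ∈ range (n - m), (if OccursAt x z i then 1 else 0) +
          (if OccursAt x z (n - m) then 1 else 0) =
        ∑ i ∈ range (n - m), (if OccursAt x z (i + 1) then 1 else 0) +
          (if OccursAt x z 0 then 1 else 0) :=
    (sum_range_succ _ _).symm.trans (sum_range_succ' _ _)
  have := telescope x
  have := telescope y
  omega

theorem occursAt_zero_of_profileVec_eq {x y : Fin n → Fin q}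
    (hxy : profileVec q n (m + 1) x = profileVec q n (m + 1) y) {z : Fin m → Fin q}
    (h0 : OccursAt x z 0) (hlast : ¬ OccursAt x z (n - m)) : OccursAt y z 0 := by
  have := occursAt_zero_add_occursAt_eq hxy z
  by_contra hy
  simp only [h0, hlast, hy, if_true, if_false] at this
  omega

theorem occursAt_sub_of_profileVec_eq {x y : Fin n → Fin q}
    (hxy : profileVec q n (m + 1) x = profileVec q n (m + 1) y) {z : Fin m → Fin q}
    (h0 : ¬ OccursAt x z 0) (hlast : OccursAt x z (n - m)) : OccursAt y z (n - m) := by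
  have := occursAt_zero_add_occursAt_eq hxy z
  by_contra hy
  simp only [h0, hlast, hy, if_true, if_false] at this
  omega

variable {k : ℕ}

theorem apply_eq_of_profileVec_eq_of_le {x y : Fin n → Fin q} (hkn : k + 2 ≤ n)
    (hx : x ⟨k, by omega⟩ ≠ x ⟨n - 1, by omega⟩)
    (hxy : profileVec q n (k + 2) x = profileVec q n (k + 2) y) (t : Fin n) (ht : t ≤ k) :
    y t = x t := by
  let p : Fin (k + 1) → Fin q := fun i => x ⟨i, by omega⟩
  have h0 : OccursAt x p 0 := fun i _ => congrArg x (Fin.ext (zero_add _))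
  have hlast : ¬ OccursAt x p (n - (k + 1)) := fun h => hx <|
    calc x ⟨k, _⟩ = p (Fin.last k) := rfl
      _ = x ⟨n - (k + 1) + k, by omega⟩ := (h (Fin.last k) _).symm
      _ = x ⟨n - 1, _⟩ := congrArg x (Fin.mk_eq_mk.2 (by omega))
  simpa [p] using occursAt_zero_of_profileVec_eq hxy h0 hlast ⟨t, by omega⟩ (by simp)

theorem apply_eq_of_profileVec_eq_of_ge {x y : Fin n → Fin q} (hkn : k + 2 ≤ n)
    (hx : x ⟨k, by omega⟩ ≠ x ⟨n - 1, by omega⟩)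
    (hxy : profileVec q n (k + 2) x = profileVec q n (k + 2) y) (t : Fin n)
    (ht : n - (k + 1) ≤ t) : y t = x t := by
  let s : Fin (k + 1) → Fin q := fun i => x ⟨n - (k + 1) + i, by omega⟩
  have h0 : ¬ OccursAt x s 0 := fun h => hx <|
    calc x ⟨k, _⟩ = x ⟨0 + k, by omega⟩ := congrArg x (Fin.ext (zero_add k).symm)
      _ = s (Fin.last k) := h (Fin.last k) _
      _ = x ⟨n - 1, _⟩ := congrArg x (Fin.ext (by simp only [Fin.val_last]; omega))
  have hlast : OccursAt x s (n - (k + 1)) := fun _ _ => rfl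
  have := occursAt_sub_of_profileVec_eq hxy h0 hlast ⟨t - (n - (k + 1)), by omega⟩ (by simp; omega)
  simpa [s, Nat.add_sub_cancel' ht] using this

theorem apply_eq_of_profileVec_eq_of_forall_gt {x y : Fin n → Fin q} (hmn : m < n)
    (hxy : profileVec q n (m + 1) x = profileVec q n (m + 1) y)
    (h : ∀ t : Fin n, m < t → y t = x t) : y ⟨m, hmn⟩ = x ⟨m, hmn⟩ := by
  let f : (Fin (m + 1) → Fin q) → ℕ := fun w => if w (Fin.last m) = x ⟨m, hmn⟩ then 1 else 0
  have hsum := sum_window_eq_of_profileVec_eq hxy f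
  let j₀ : Fin (n + 1 - (m + 1)) := ⟨0, by omega⟩
  rw [← add_sum_erase _ _ (mem_univ j₀), ← add_sum_erase _ _ (mem_univ j₀)] at hsum
  have hrest : ∀ j ∈ univ.erase j₀, f (window x j) = f (window y j) := by
    intro j hj
    have : (j : ℕ) ≠ 0 := fun h => (mem_erase.1 hj).1 (Fin.ext h)
    have hlast : window y j (Fin.last m) = window x j (Fin.last m) := h _ (by simp; omega)
    simp only [f, hlast]
  rw [sum_congr rfl hrest] at hsum
  simpa [f, window, j₀] using hsum

theorem eq_of_profileVec_eq {x y : Fin n → Fin q} (hℓ2 : 2 ≤ ℓ) (hℓn : ℓ ≤ n) (hn2 : n < 2 * ℓ)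
    (hx : x ⟨ℓ - 2, by omega⟩ ≠ x ⟨n - 1, by omega⟩)
    (hxy : profileVec q n ℓ x = profileVec q n ℓ y) : y = x := by
  obtain ⟨k, rfl⟩ : ∃ k, ℓ = k + 2 := ⟨ℓ - 2, by omega⟩
  have hx' : x ⟨k, by omega⟩ ≠ x ⟨n - 1, by omega⟩ := by simpa using hx
  have hsuf := apply_eq_of_profileVec_eq_of_ge hℓn hx' hxy
  funext t
  by_cases hpre : t ≤ k
  · exact apply_eq_of_profileVec_eq_of_le hℓn hx' hxy t hpre
  by_cases hend : n - (k + 1) ≤ t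
  · exact hsuf t hend
  have hmid : k + 1 < n := by omega
  obtain rfl : t = ⟨k + 1, hmid⟩ := Fin.ext (show (t : ℕ) = k + 1 by omega)
  exact apply_eq_of_profileVec_eq_of_forall_gt _ hxy fun s hs => hsuf s (by omega)

theorem card_filter_apply_ne {ι α : Type*} [Fintype ι] [DecidableEq ι] [Fintype α]
    [DecidableEq α] (i : ι) (a : α) :
    #{f : ι → α | f i ≠ a} = Fintype.card α ^ (Fintype.card ι - 1) * (Fintype.card α - 1) := by
  have heq := Fintype.card_filter_piFinset_const_eq_of_mem (univ : Finset α) i (mem_univ a)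
  rw [Fintype.piFinset_univ, card_univ] at heq
  have hsplit := card_filter_add_card_filter_not (s := univ) fun f : ι → α => f i = a
  have hι : Fintype.card ι = Fintype.card ι - 1 + 1 := by
    have := Fintype.card_pos_iff.2 ⟨i⟩
    omega
  rw [card_univ, Fintype.card_fun, heq, hι, pow_succ, Nat.add_sub_cancel] at hsplit
  rw [Nat.mul_sub_one, ← hsplit, Nat.add_sub_cancel_left]

def decode1 (q n ℓ : ℕ) (hq : 0 < q) (hn : 0 < n) (hℓn : ℓ ≤ n) (x : Fin n → Fin q) :
    Fin n → Fin q :=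
  if x ⟨n - 1, by omega⟩ = ⟨0, hq⟩ then Function.update x ⟨n - 1, by omega⟩ (x ⟨ℓ - 2, by omega⟩)
  else x

theorem mk_sub_two_ne_mk_sub_one (hℓ2 : 2 ≤ ℓ) (hℓn : ℓ ≤ n) :
    (⟨ℓ - 2, by omega⟩ : Fin n) ≠ ⟨n - 1, by omega⟩ := by
  simp only [ne_eq, Fin.mk.injEq]
  omega

section Encode

variable (hq : 0 < q) (hn : 0 < n) (hℓ2 : 2 ≤ ℓ) (hℓn : ℓ ≤ n)

theorem encode1_apply_ne {c : Fin n → Fin q} (hc : c ⟨n - 1, by omega⟩ ≠ ⟨0, hq⟩) :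
    encode1 q n ℓ hq hn hℓ2 hℓn c ⟨ℓ - 2, by omega⟩ ≠
      encode1 q n ℓ hq hn hℓ2 hℓn c ⟨n - 1, by omega⟩ := by
  have hne := mk_sub_two_ne_mk_sub_one hℓ2 hℓn
  unfold encode1
  split_ifs with h
  · exact Ne.symm h
  · rwa [Function.update_of_ne hne, Function.update_self, ← not_ne_iff.1 h]

theorem decode1_encode1 {c : Fin n → Fin q} (hc : c ⟨n - 1, by omega⟩ ≠ ⟨0, hq⟩) :
    decode1 q n ℓ hq hn hℓn (encode1 q n ℓ hq hn hℓ2 hℓn c) = c := by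
  have hne := mk_sub_two_ne_mk_sub_one hℓ2 hℓn
  unfold encode1
  split_ifs with h
  · simp [decode1, hc]
  · simp [decode1, Function.update_of_ne hne, ← not_ne_iff.1 h]

theorem encode1_injOn :
    Set.InjOn (encode1 q n ℓ hq hn hℓ2 hℓn) {c | c ⟨n - 1, by omega⟩ ≠ ⟨0, hq⟩} :=
  Set.LeftInvOn.injOn fun _ hc => decode1_encode1 hq hn hℓ2 hℓn hc

end Encode

/-- `encode₁` is injective on inputs with nonzero last symbol, its outputs satisfy
`x[ℓ−1] ≠ x[n]`, and consequently for `ℓ ≤ n < 2ℓ` there are at least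
`q^{n−1}(q−1)` words of length `n` with pairwise distinct ℓ-gram profile vectors. -/
theorem stmt_7 (q n ℓ : ℕ) (hq : 2 ≤ q) (hℓ2 : 2 ≤ ℓ) (hℓn : ℓ ≤ n) (hn2 : n < 2 * ℓ) :
    Set.InjOn (encode1 q n ℓ (by omega) (by omega) hℓ2 hℓn)
      {c : Fin n → Fin q | c ⟨n - 1, by omega⟩ ≠ ⟨0, by omega⟩} ∧
    (∀ c : Fin n → Fin q, c ⟨n - 1, by omega⟩ ≠ ⟨0, by omega⟩ →
      encode1 q n ℓ (by omega) (by omega) hℓ2 hℓn c ⟨ℓ - 2, by omega⟩ ≠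
        encode1 q n ℓ (by omega) (by omega) hℓ2 hℓn c ⟨n - 1, by omega⟩) ∧
    (∃ S : Finset (Fin n → Fin q), q ^ (n - 1) * (q - 1) ≤ S.card ∧
      ∀ x ∈ S, ∀ y ∈ S, x ≠ y → profileVec q n ℓ x ≠ profileVec q n ℓ y) := by
  have hq0 : 0 < q := by omega
  have hn0 : 0 < n := by omega
  refine ⟨encode1_injOn hq0 hn0 hℓ2 hℓn, fun c hc => encode1_apply_ne hq0 hn0 hℓ2 hℓn hc, ?_⟩
  refine ⟨(univ.filter fun c : Fin n → Fin q => c ⟨n - 1, by omega⟩ ≠ ⟨0, hq0⟩).image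
    (encode1 q n ℓ hq0 hn0 hℓ2 hℓn), ?_, ?_⟩
  · rw [card_image_of_injOn (by simpa using encode1_injOn hq0 hn0 hℓ2 hℓn),
      card_filter_apply_ne, Fintype.card_fin, Fintype.card_fin]
  · simp only [mem_image, mem_filter, mem_univ, true_and]
    rintro _ ⟨c, hc, rfl⟩ _ ⟨c', hc', rfl⟩ hne hprof
    exact hne (eq_of_profileVec_eq hℓ2 hℓn hn2 (encode1_apply_ne hq0 hn0 hℓ2 hℓn hc) hprof).symm
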